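/- Let p ≥ 1 be an integer, λ ∈ (0,1], and let F be a polyharmonic mapping of class HS_p(λ) with coefficients a_{n,k}, b_{n,k}. Let δ > 0 satisfy δ ≤ (λ/(p+λ))·(2 − Σ_{k=1}^p (2k−1)(|a_{1,k}| + |b_{1,k}|)). Then every polyharmonic mapping G in the δ-neighborhood N_δ(F) (with coefficients A_{n,k}, B_{n,k} and A_{1,1} = 1) belongs to the class HS_p, i.e., Σ_{k=1}^p Σ_{n=2}^∞ (2(k−1)+n)(|A_{n,k}| + |B_{n,k}|) ≤ 1 − |B_{1,1}| − Σ_{k=2}^p (2k−1)(|A_{1,k}| + |B_{1,k}|) and 0 ≤ |B_{1,1}| + Σ_{k=2}^p (|A_{1,k}| + |B_{1,k}|) < 1. -/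

import Mathlib

/-! Coefficientwise `‖A‖ ≤ ‖a - A‖ + ‖a‖`. For `n ≥ 2` the `HS_p` weight `2(k-1) + n` is at most
`p/(p+λ)` times the `HS_p(λ)` weight, so the tail of `G` is at most its distance from the tail of `F`
plus `p/(p+λ) (2 - T)`, where `T = Σ_k (2k-1)(|a_{1,k}| + |b_{1,k}|)`; the first-order coefficients
of `G` contribute at most `T - 1` plus their distance from those of `F` (as `a_{1,1} = 1`). The
distance is at most `δ ≤ λ/(p+λ) (2 - T)`, so everything adds up to at most `1`; without the
tail the bound is strict because `T < 2`. -/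

open Complex Metric Set

/-- The polyharmonic mapping associated to coefficients `a b : ℕ → ℕ → ℂ`
(`a n k` is the coefficient `a_{n,k}`):
`F(z) = Σ_{k=1}^p |z|^{2(k-1)} Σ_{n=1}^∞ (a_{n,k} z^n + conj(b_{n,k}) conj(z)^n)`. -/
noncomputable def polyF (p : ℕ) (a b : ℕ → ℕ → ℂ) (z : ℂ) : ℂ :=
  ∑ k ∈ Finset.Icc 1 p, ((‖z‖ : ℂ)) ^ (2 * (k - 1)) *
    ∑' n : ℕ, if 1 ≤ n then
      a n k * z ^ n + (starRingEnd ℂ) (b n k) * ((starRingEnd ℂ) z) ^ n else 0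

/-- The coefficient conditions defining the class `HS_p(λ)`. -/
def HSLam (p : ℕ) (lam : ℝ) (a b : ℕ → ℕ → ℂ) : Prop :=
  a 1 1 = 1 ∧
  (∀ k ∈ Finset.Icc 1 p,
    Summable (fun n : ℕ => ‖a n k‖ + ‖b n k‖)) ∧
  (∀ k ∈ Finset.Icc 1 p, Summable (fun n : ℕ =>
    if 2 ≤ n then (2 * ((k : ℝ) - 1) + n * (lam * n + 1 - lam)) *
      (‖a n k‖ + ‖b n k‖) else 0)) ∧
  (∑ k ∈ Finset.Icc 1 p, ∑' n : ℕ,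
      (if 2 ≤ n then (2 * ((k : ℝ) - 1) + n * (lam * n + 1 - lam)) *
        (‖a n k‖ + ‖b n k‖) else 0))
    ≤ 2 - ∑ k ∈ Finset.Icc 1 p,
        (2 * (k : ℝ) - 1) * (‖a 1 k‖ + ‖b 1 k‖) ∧
  1 ≤ ∑ k ∈ Finset.Icc 1 p,
        (2 * (k : ℝ) - 1) * (‖a 1 k‖ + ‖b 1 k‖) ∧
  ∑ k ∈ Finset.Icc 1 p,
        (2 * (k : ℝ) - 1) * (‖a 1 k‖ + ‖b 1 k‖) < 2

lemma tsum_le_tsum_add_mul_tsum {ι : Type*} {f g h : ι → ℝ} {c : ℝ} (hf : ∀ i, 0 ≤ f i)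
    (hfgh : ∀ i, f i ≤ g i + c * h i) (hg : Summable g) (hh : Summable h) :
    ∑' i, f i ≤ ∑' i, g i + c * ∑' i, h i := by
  have hgh : Summable fun i => g i + c * h i := hg.add (hh.mul_left c)
  calc ∑' i, f i ≤ ∑' i, (g i + c * h i) :=
        (hgh.of_nonneg_of_le hf hfgh).tsum_le_tsum hfgh hgh
    _ = ∑' i, g i + c * ∑' i, h i := by rw [hg.tsum_add (hh.mul_left c), tsum_mul_left]

lemma sum_Icc_one_eq_add_sum_Icc_two {M : Type*} [AddCommMonoid M] (f : ℕ → M) {p : ℕ}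
    (hp : 1 ≤ p) : ∑ k ∈ Finset.Icc 1 p, f k = f 1 + ∑ k ∈ Finset.Icc 2 p, f k := by
  rw [← Finset.insert_Icc_add_one_left_eq_Icc hp, Finset.sum_insert (by simp)]
  rfl

lemma weighted_tail_term_nonneg {k n : ℕ} (hk : 1 ≤ k) {s : ℝ} (hs : 0 ≤ s) :
    0 ≤ if 2 ≤ n then (2 * ((k : ℝ) - 1) + n) * s else 0 := by
  have : (1 : ℝ) ≤ k := by exact_mod_cast hk
  split_ifs
  · positivity
  · rfl

-- After clearing the denominator `p + λ` this is `2 (k - 1) + n ≤ p n (n - 1)`, which holds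
-- because `(n - 2) (p (n + 1) - 1) ≥ 0` and `k ≤ p`.
lemma weight_le_div_mul_weight {p k n : ℕ} {lam : ℝ} (hlam : 0 ≤ lam) (hk : 1 ≤ k)
    (hkp : k ≤ p) (hn : 2 ≤ n) :
    2 * ((k : ℝ) - 1) + n ≤ p / (p + lam) * (2 * ((k : ℝ) - 1) + n * (lam * n + 1 - lam)) := by
  have hk1 : (1 : ℝ) ≤ k := by exact_mod_cast hk
  have hkp' : (k : ℝ) ≤ p := by exact_mod_cast hkp
  have hn2 : (2 : ℝ) ≤ n := by exact_mod_cast hn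
  have hkey : 2 * ((k : ℝ) - 1) + n ≤ p * (n * (n - 1)) := by
    nlinarith [mul_nonneg (sub_nonneg.2 hn2) (by nlinarith : (0 : ℝ) ≤ p * (n + 1) - 1)]
  rw [div_mul_eq_mul_div, le_div_iff₀ (by linarith)]
  nlinarith [mul_le_mul_of_nonneg_left hkey hlam]

section Coefficients

variable {E : Type*} [SeminormedAddCommGroup E]

lemma mul_norm_add_norm_le (x y X Y : E) {w v c : ℝ} (hw : 0 ≤ w) (hwv : w ≤ c * v) :
    w * (‖X‖ + ‖Y‖) ≤ w * (‖x - X‖ + ‖y - Y‖) + c * (v * (‖x‖ + ‖y‖)) := by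
  have hX := norm_le_norm_add_norm_sub x X
  have hY := norm_le_norm_add_norm_sub y Y
  calc w * (‖X‖ + ‖Y‖) ≤ w * (‖x - X‖ + ‖y - Y‖) + w * (‖x‖ + ‖y‖) := by
        rw [← mul_add]
        exact mul_le_mul_of_nonneg_left (by linarith) hw
    _ ≤ w * (‖x - X‖ + ‖y - Y‖) + c * (v * (‖x‖ + ‖y‖)) := by
        rw [← mul_assoc]
        gcongr

lemma sum_mul_norm_add_norm_le {ι : Type*} (s : Finset ι) (x y X Y : ι → E) {w : ι → ℝ}
    (hw : ∀ i ∈ s, 0 ≤ w i) :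
    ∑ i ∈ s, w i * (‖X i‖ + ‖Y i‖) ≤
      ∑ i ∈ s, w i * (‖x i - X i‖ + ‖y i - Y i‖) + ∑ i ∈ s, w i * (‖x i‖ + ‖y i‖) := by
  rw [← Finset.sum_add_distrib]
  refine Finset.sum_le_sum fun i hi => ?_
  simpa using mul_norm_add_norm_le (x i) (y i) (X i) (Y i) (hw i hi) (one_mul (w i)).ge

lemma tsum_weighted_tail_le (x y X Y : ℕ → E) {p k : ℕ} {lam : ℝ} (hlam : 0 ≤ lam)
    (hk : 1 ≤ k) (hkp : k ≤ p)
    (hd : Summable fun n : ℕ =>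
      if 2 ≤ n then (2 * ((k : ℝ) - 1) + n) * (‖x n - X n‖ + ‖y n - Y n‖) else 0)
    (hv : Summable fun n : ℕ =>
      if 2 ≤ n then (2 * ((k : ℝ) - 1) + n * (lam * n + 1 - lam)) * (‖x n‖ + ‖y n‖) else 0) :
    ∑' n : ℕ, (if 2 ≤ n then (2 * ((k : ℝ) - 1) + n) * (‖X n‖ + ‖Y n‖) else 0) ≤
      ∑' n : ℕ, (if 2 ≤ n then (2 * ((k : ℝ) - 1) + n) * (‖x n - X n‖ + ‖y n - Y n‖) else 0) +
        p / (p + lam) * ∑' n : ℕ,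
          (if 2 ≤ n then (2 * ((k : ℝ) - 1) + n * (lam * n + 1 - lam)) * (‖x n‖ + ‖y n‖)
            else 0) := by
  have hk1 : (1 : ℝ) ≤ k := by exact_mod_cast hk
  refine tsum_le_tsum_add_mul_tsum (fun n => weighted_tail_term_nonneg hk (by positivity))
    (fun n => ?_) hd hv
  split_ifs with hn
  · exact mul_norm_add_norm_le (x n) (y n) (X n) (Y n) (by positivity)
      (weight_le_div_mul_weight hlam hk hkp hn)
  · simp

lemma sum_tsum_weighted_tail_le (a b A B : ℕ → ℕ → E) {p : ℕ} {lam : ℝ} (hlam : 0 ≤ lam)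
    (hd : ∀ k ∈ Finset.Icc 1 p, Summable fun n : ℕ =>
      if 2 ≤ n then (2 * ((k : ℝ) - 1) + n) * (‖a n k - A n k‖ + ‖b n k - B n k‖) else 0)
    (hv : ∀ k ∈ Finset.Icc 1 p, Summable fun n : ℕ =>
      if 2 ≤ n then (2 * ((k : ℝ) - 1) + n * (lam * n + 1 - lam)) * (‖a n k‖ + ‖b n k‖)
        else 0) :
    ∑ k ∈ Finset.Icc 1 p, ∑' n : ℕ,
        (if 2 ≤ n then (2 * ((k : ℝ) - 1) + n) * (‖A n k‖ + ‖B n k‖) else 0) ≤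
      ∑ k ∈ Finset.Icc 1 p, ∑' n : ℕ,
          (if 2 ≤ n then (2 * ((k : ℝ) - 1) + n) * (‖a n k - A n k‖ + ‖b n k - B n k‖)
            else 0) +
        p / (p + lam) * ∑ k ∈ Finset.Icc 1 p, ∑' n : ℕ,
          (if 2 ≤ n then (2 * ((k : ℝ) - 1) + n * (lam * n + 1 - lam)) * (‖a n k‖ + ‖b n k‖)
            else 0) := by
  rw [Finset.mul_sum, ← Finset.sum_add_distrib]
  refine Finset.sum_le_sum fun k hk => ?_
  obtain ⟨hk1, hkp⟩ := Finset.mem_Icc.1 hk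
  exact tsum_weighted_tail_le (a · k) (b · k) (A · k) (B · k) hlam hk1 hkp (hd k hk) (hv k hk)

lemma first_coeffs_le (a b A B : ℕ → ℕ → E) {p : ℕ} (hp : 1 ≤ p) (ha : ‖a 1 1‖ = 1) :
    ‖B 1 1‖ + ∑ k ∈ Finset.Icc 2 p, (2 * (k : ℝ) - 1) * (‖A 1 k‖ + ‖B 1 k‖) ≤
      ∑ k ∈ Finset.Icc 1 p, (2 * (k : ℝ) - 1) * (‖a 1 k‖ + ‖b 1 k‖) - 1 +
        (∑ k ∈ Finset.Icc 2 p, (2 * (k : ℝ) - 1) * (‖a 1 k - A 1 k‖ + ‖b 1 k - B 1 k‖) +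
          ‖b 1 1 - B 1 1‖) := by
  have hB := norm_le_norm_add_norm_sub (b 1 1) (B 1 1)
  have hsum := sum_mul_norm_add_norm_le (Finset.Icc 2 p) (a 1 ·) (b 1 ·) (A 1 ·) (B 1 ·)
    (w := fun k : ℕ => 2 * (k : ℝ) - 1) fun k hk => by
      have : (2 : ℝ) ≤ k := by exact_mod_cast (Finset.mem_Icc.1 hk).1
      linarith
  rw [sum_Icc_one_eq_add_sum_Icc_two _ hp, ha]
  norm_num only [Nat.cast_one] at hsum ⊢
  linarith

end Coefficients

theorem neighborhood_in_HSp_general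
    (p : ℕ) (hp : 1 ≤ p) (lam : ℝ) (hlam : lam ∈ Set.Ioc (0 : ℝ) 1)
    (a b : ℕ → ℕ → ℂ) (hF : HSLam p lam a b)
    (δ : ℝ)
    (hδ : δ ≤ lam / (p + lam) *
      (2 - ∑ k ∈ Finset.Icc 1 p,
        (2 * (k : ℝ) - 1) * (‖a 1 k‖ + ‖b 1 k‖)))
    (A B : ℕ → ℕ → ℂ)
    (hABsum : ∀ k ∈ Finset.Icc 1 p, Summable (fun n : ℕ =>
      if 2 ≤ n then (2 * ((k : ℝ) - 1) + n) *
        (‖a n k - A n k‖ + ‖b n k - B n k‖) else 0))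
    (hNbhd : ∑ k ∈ Finset.Icc 1 p, ∑' n : ℕ,
        (if 2 ≤ n then (2 * ((k : ℝ) - 1) + n) *
          (‖a n k - A n k‖ + ‖b n k - B n k‖) else 0)
      + ∑ k ∈ Finset.Icc 2 p,
          (2 * (k : ℝ) - 1) * (‖a 1 k - A 1 k‖ + ‖b 1 k - B 1 k‖)
      + ‖b 1 1 - B 1 1‖ ≤ δ) :
    (∑ k ∈ Finset.Icc 1 p, ∑' n : ℕ,
        (if 2 ≤ n then (2 * ((k : ℝ) - 1) + n) *
          (‖A n k‖ + ‖B n k‖) else 0)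
      ≤ 1 - ‖B 1 1‖ - ∑ k ∈ Finset.Icc 2 p,
          (2 * (k : ℝ) - 1) * (‖A 1 k‖ + ‖B 1 k‖)) ∧
    0 ≤ ‖B 1 1‖ + ∑ k ∈ Finset.Icc 2 p,
        (‖A 1 k‖ + ‖B 1 k‖) ∧
    ‖B 1 1‖ + ∑ k ∈ Finset.Icc 2 p,
        (‖A 1 k‖ + ‖B 1 k‖) < 1 := by
  obtain ⟨hlam0, -⟩ := hlam
  obtain ⟨ha11, -, hsumF, hW, -, hT2⟩ := hF
  have hp0 : (0 : ℝ) < p := by exact_mod_cast hp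
  have hc0 : 0 < (p : ℝ) / (p + lam) := by positivity
  have hc : lam / (p + lam) = 1 - p / (p + lam) := by field_simp; ring
  have htail := sum_tsum_weighted_tail_le a b A B hlam0.le hABsum hsumF
  have hfirst := first_coeffs_le a b A B hp (by simp [ha11])
  have hD : 0 ≤ ∑ k ∈ Finset.Icc 1 p, ∑' n : ℕ,
      (if 2 ≤ n then (2 * ((k : ℝ) - 1) + n) * (‖a n k - A n k‖ + ‖b n k - B n k‖) else 0) :=
    Finset.sum_nonneg fun k hk => tsum_nonneg fun n =>
      weighted_tail_term_nonneg (Finset.mem_Icc.1 hk).1 (by positivity)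
  have hunweighted : ∑ k ∈ Finset.Icc 2 p, (‖A 1 k‖ + ‖B 1 k‖) ≤
      ∑ k ∈ Finset.Icc 2 p, (2 * (k : ℝ) - 1) * (‖A 1 k‖ + ‖B 1 k‖) := by
    refine Finset.sum_le_sum fun k hk => le_mul_of_one_le_left (by positivity) ?_
    have : (2 : ℝ) ≤ k := by exact_mod_cast (Finset.mem_Icc.1 hk).1
    linarith
  rw [hc] at hδ
  set T := ∑ k ∈ Finset.Icc 1 p, (2 * (k : ℝ) - 1) * (‖a 1 k‖ + ‖b 1 k‖)
  have hcW := mul_le_mul_of_nonneg_left hW hc0.le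
  have hcT : 0 < p / (p + lam) * (2 - T) := mul_pos hc0 (by linarith)
  refine ⟨?_, by positivity, ?_⟩
  · linarith
  · linarith

/-- Neighborhoods: if `F ∈ HS_p(λ)` with `λ ∈ (0,1]` and
`δ ≤ (λ/(p+λ))(2 − Σ_{k=1}^p (2k−1)(|a_{1,k}| + |b_{1,k}|))`, then every mapping in
the `δ`-neighborhood `N_δ(F)` belongs to `HS_p`. -/
theorem neighborhood_in_HSp
    (p : ℕ) (hp : 1 ≤ p) (lam : ℝ) (hlam : lam ∈ Set.Ioc (0 : ℝ) 1)
    (a b : ℕ → ℕ → ℂ) (hF : HSLam p lam a b)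
    (δ : ℝ) (hδ0 : 0 < δ)
    (hδ : δ ≤ lam / (p + lam) *
      (2 - ∑ k ∈ Finset.Icc 1 p,
        (2 * (k : ℝ) - 1) * (‖a 1 k‖ + ‖b 1 k‖)))
    (A B : ℕ → ℕ → ℂ) (hA11 : A 1 1 = 1)
    (hABsum : ∀ k ∈ Finset.Icc 1 p, Summable (fun n : ℕ =>
      if 2 ≤ n then (2 * ((k : ℝ) - 1) + n) *
        (‖a n k - A n k‖ + ‖b n k - B n k‖) else 0))
    (hNbhd : ∑ k ∈ Finset.Icc 1 p, ∑' n : ℕ,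
        (if 2 ≤ n then (2 * ((k : ℝ) - 1) + n) *
          (‖a n k - A n k‖ + ‖b n k - B n k‖) else 0)
      + ∑ k ∈ Finset.Icc 2 p,
          (2 * (k : ℝ) - 1) * (‖a 1 k - A 1 k‖ + ‖b 1 k - B 1 k‖)
      + ‖b 1 1 - B 1 1‖ ≤ δ) :
    (∑ k ∈ Finset.Icc 1 p, ∑' n : ℕ,
        (if 2 ≤ n then (2 * ((k : ℝ) - 1) + n) *
          (‖A n k‖ + ‖B n k‖) else 0)
      ≤ 1 - ‖B 1 1‖ - ∑ k ∈ Finset.Icc 2 p,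
          (2 * (k : ℝ) - 1) * (‖A 1 k‖ + ‖B 1 k‖)) ∧
    0 ≤ ‖B 1 1‖ + ∑ k ∈ Finset.Icc 2 p,
        (‖A 1 k‖ + ‖B 1 k‖) ∧
    ‖B 1 1‖ + ∑ k ∈ Finset.Icc 2 p,
        (‖A 1 k‖ + ‖B 1 k‖) < 1 :=
  neighborhood_in_HSp_general p hp lam hlam a b hF δ hδ A B hABsum hNbhd
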